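/- For the MP₂ model, at E_1 = 0 the partial derivative ∂E_3/∂E_1 is strictly positive on the realizable domain; moreover its value restricted to E_2 = E_1²/E_0 as α → 0 equals 12/35. -/

import Mathlib

open MeasureTheory intervalIntegral

/-- The M₁ parameter `α` as a function of `u = E₁/E₀`. -/
noncomputable def mpAlpha (u : ℝ) : ℝ := -(3 * u) / (2 + Real.sqrt (4 - 3 * u ^ 2))

/-- Normalization constant of the M₁ weight. -/
noncomputable def mpEps (a : ℝ) : ℝ := 3 * (1 - a ^ 2) ^ 3 / (2 * (3 + a ^ 2))

/-- The normalized M₁ ansatz used as weight function, as a function of `u = E₁/E₀`. -/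
noncomputable def mpWeight (u μ : ℝ) : ℝ := mpEps (mpAlpha u) / (1 + mpAlpha u * μ) ^ 4

/-- Moments `𝓔_k` of the weight function. -/
noncomputable def mpMoment (u : ℝ) (k : ℕ) : ℝ := ∫ μ in (-1 : ℝ)..1, μ ^ k * mpWeight u μ

/-- `β = (𝓔₃ - 𝓔₂𝓔₁)/(𝓔₂ - 𝓔₁²)`. -/
noncomputable def mpBeta (u : ℝ) : ℝ :=
  (mpMoment u 3 - mpMoment u 2 * mpMoment u 1) / (mpMoment u 2 - (mpMoment u 1) ^ 2)

/-- Expansion coefficient `f₂` of the MP₂ model. -/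
noncomputable def mpF2 (E0 E1 E2 : ℝ) : ℝ :=
  (E2 - E0 * mpMoment (E1 / E0) 2) /
    (mpMoment (E1 / E0) 4 - (mpMoment (E1 / E0) 2) ^ 2 -
      mpBeta (E1 / E0) * (mpMoment (E1 / E0) 3 - mpMoment (E1 / E0) 1 * mpMoment (E1 / E0) 2))

/-- The MP₂ closure moment `E₃(E₀,E₁,E₂)`. -/
noncomputable def mpE3 (E0 E1 E2 : ℝ) : ℝ :=
  E0 * mpMoment (E1 / E0) 3 +
    mpF2 E0 E1 E2 *
      (mpMoment (E1 / E0) 5 - mpMoment (E1 / E0) 2 * mpMoment (E1 / E0) 3 -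
        mpBeta (E1 / E0) * (mpMoment (E1 / E0) 4 - mpMoment (E1 / E0) 1 * mpMoment (E1 / E0) 3))

/-!
Write `u = E₁/E₀` and `v = E₂/E₀`. The closure is affine in `v`: `E₃ = E₀ (A(u) + v R(u))`, with
`A = mpE3Intercept` and `R = mpE3Slope = ∂E₃/∂E₂` rational in the moments `𝓔ₖ(u)`, so
`∂E₃/∂E₁ = A'(u) + v R'(u)`.
The M₁ weight is smooth in `(α, μ)` on `(-1, 1) × [-1, 1]` and `α(u)` is smooth near `0`, so
differentiating under the integral sign makes every `𝓔ₖ` a `C¹` function near `u = 0`. At `u = 0`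
the weight is uniform, `𝓔ₖ(0) = 1/(k+1)` for even `k` and `𝓔ₖ'(0) = 3/(k+2)` for odd `k` (the
others vanish), which gives `A'(0) = 12/35` and `R'(0) = 27/35`. Hence
`∂E₃/∂E₁ = 12/35 + (27/35) E₂/E₀ > 0` at `E₁ = 0`, and along `E₂ = E₁²/E₀` we have `v = u² → 0`,
so continuity of `A'` and `R'` at `0` gives the limit `12/35`.
-/

open Set Filter Topology Function
open scoped Interval

theorem ContDiffAt.continuousAt_deriv {𝕜 F : Type*} [NontriviallyNormedField 𝕜]
    [NormedAddCommGroup F] [NormedSpace 𝕜 F] {f : 𝕜 → F} {x : 𝕜} {n : WithTop ℕ∞}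
    (hf : ContDiffAt 𝕜 n f x) (hn : n ≠ 0) : ContinuousAt (deriv f) x :=
  (hf.continuousAt_fderiv hn).clm_apply continuousAt_const

section ParametricIntervalIntegral

variable {E : Type*} [NormedAddCommGroup E] {f f' : ℝ → ℝ → E} {s : Set ℝ} {a b x₀ : ℝ}

theorem exists_ball_subset_bound_of_continuousOn (hs : s ∈ 𝓝 x₀)
    (hf : ContinuousOn (uncurry f) (s ×ˢ [[a, b]])) :
    ∃ r > 0, Metric.ball x₀ r ⊆ s ∧ ∃ C, ∀ x ∈ Metric.ball x₀ r, ∀ t ∈ [[a, b]], ‖f x t‖ ≤ C := by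
  obtain ⟨r, hr, hrs⟩ := Metric.nhds_basis_closedBall.mem_iff.1 hs
  obtain ⟨C, hC⟩ := ((isCompact_closedBall x₀ r).prod isCompact_uIcc).exists_bound_of_continuousOn
    (hf.mono (prod_mono hrs le_rfl))
  exact ⟨r, hr, Metric.ball_subset_closedBall.trans hrs, C,
    fun x hx t ht => hC (x, t) ⟨Metric.ball_subset_closedBall hx, ht⟩⟩

variable [NormedSpace ℝ E]

theorem continuousAt_intervalIntegral_of_continuousOn (hs : s ∈ 𝓝 x₀)
    (hf : ContinuousOn (uncurry f) (s ×ˢ [[a, b]])) :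
    ContinuousAt (fun x => ∫ t in a..b, f x t) x₀ := by
  obtain ⟨r, hr, -, C, hC⟩ := exists_ball_subset_bound_of_continuousOn hs hf
  refine intervalIntegral.continuousAt_of_dominated_interval (bound := fun _ => C) ?_ ?_
    intervalIntegrable_const ?_
  · filter_upwards [hs] with x hx
    exact ((hf.comp (continuous_const.prodMk continuous_id).continuousOn
      fun t ht => ⟨hx, ht⟩).mono uIoc_subset_uIcc |>.aestronglyMeasurable measurableSet_uIoc)
  · filter_upwards [Metric.ball_mem_nhds x₀ hr] with x hx
    exact ae_of_all _ fun t ht => hC x hx t (uIoc_subset_uIcc ht)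
  · refine ae_of_all _ fun t ht => ?_
    exact (hf.comp (continuous_id.prodMk continuous_const).continuousOn
      fun x hx => ⟨hx, uIoc_subset_uIcc ht⟩).continuousAt hs

theorem hasDerivAt_intervalIntegral_of_continuousOn (hs : s ∈ 𝓝 x₀)
    (hf : ∀ x ∈ s, ContinuousOn (f x) [[a, b]])
    (hf' : ContinuousOn (uncurry f') (s ×ˢ [[a, b]]))
    (hderiv : ∀ x ∈ s, ∀ t ∈ [[a, b]], HasDerivAt (f · t) (f' x t) x) :
    HasDerivAt (fun x => ∫ t in a..b, f x t) (∫ t in a..b, f' x₀ t) x₀ := by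
  obtain ⟨r, hr, hrs, C, hC⟩ := exists_ball_subset_bound_of_continuousOn hs hf'
  have hx₀ : x₀ ∈ s := mem_of_mem_nhds hs
  refine (intervalIntegral.hasDerivAt_integral_of_dominated_loc_of_deriv_le (bound := fun _ => C)
    (Metric.ball_mem_nhds x₀ hr) ?_ (hf x₀ hx₀).intervalIntegrable ?_ ?_ intervalIntegrable_const
    ?_).2
  · filter_upwards [hs] with x hx
    exact ((hf x hx).mono uIoc_subset_uIcc).aestronglyMeasurable measurableSet_uIoc
  · exact ((hf'.comp (continuous_const.prodMk continuous_id).continuousOn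
      fun t ht => ⟨hx₀, ht⟩).mono uIoc_subset_uIcc |>.aestronglyMeasurable measurableSet_uIoc)
  · exact ae_of_all _ fun t ht x hx => hC x hx t (uIoc_subset_uIcc ht)
  · exact ae_of_all _ fun t ht x hx => hderiv x (hrs hx) t (uIoc_subset_uIcc ht)

theorem contDiffOn_intervalIntegral_of_continuousOn (hs : IsOpen s)
    (hf : ∀ x ∈ s, ContinuousOn (f x) [[a, b]])
    (hf' : ContinuousOn (uncurry f') (s ×ˢ [[a, b]]))
    (hderiv : ∀ x ∈ s, ∀ t ∈ [[a, b]], HasDerivAt (f · t) (f' x t) x) :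
    ContDiffOn ℝ 1 (fun x => ∫ t in a..b, f x t) s := by
  have hF : ∀ x ∈ s, HasDerivAt (fun x => ∫ t in a..b, f x t) (∫ t in a..b, f' x t) x :=
    fun x hx => hasDerivAt_intervalIntegral_of_continuousOn (hs.mem_nhds hx) hf hf' hderiv
  rw [show (1 : WithTop ℕ∞) = 0 + 1 from rfl, contDiffOn_succ_iff_deriv_of_isOpen hs]
  refine ⟨fun x hx => (hF x hx).differentiableAt.differentiableWithinAt, by simp, ?_⟩
  rw [contDiffOn_zero]
  refine ContinuousOn.congr (fun x hx => ?_) fun x hx => (hF x hx).deriv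
  exact (continuousAt_intervalIntegral_of_continuousOn (hs.mem_nhds hx) hf').continuousWithinAt

end ParametricIntervalIntegral

noncomputable def m1Weight (a μ : ℝ) : ℝ := mpEps a / (1 + a * μ) ^ 4

noncomputable def m1WeightDeriv (a μ : ℝ) : ℝ :=
  deriv mpEps a / (1 + a * μ) ^ 4 - 4 * μ * mpEps a / (1 + a * μ) ^ 5

noncomputable def m1Moment (k : ℕ) (a : ℝ) : ℝ := ∫ μ in (-1 : ℝ)..1, μ ^ k * m1Weight a μ

theorem mpMoment_eq_m1Moment (u : ℝ) (k : ℕ) : mpMoment u k = m1Moment k (mpAlpha u) := rfl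

theorem contDiff_mpEps {n : WithTop ℕ∞} : ContDiff ℝ n mpEps :=
  ContDiff.div (by fun_prop) (by fun_prop) fun a => by positivity

theorem one_add_mul_pos {a t : ℝ} (ha : a ∈ Ioo (-1) 1) (ht : t ∈ [[-1, 1]]) : 0 < 1 + a * t := by
  rw [uIcc_of_le (by norm_num)] at ht
  obtain ⟨ha₁, ha₂⟩ := ha
  obtain ⟨ht₁, ht₂⟩ := ht
  rcases le_total a 0 with h | h <;> nlinarith

theorem hasDerivAt_m1Weight {a μ : ℝ} (h : 1 + a * μ ≠ 0) :
    HasDerivAt (m1Weight · μ) (m1WeightDeriv a μ) a := by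
  have hden : HasDerivAt (fun b => (1 + b * μ) ^ 4) (4 * (1 + a * μ) ^ 3 * μ) a :=
    ((((hasDerivAt_id a).mul_const μ).const_add 1).pow 4).congr_deriv (by simp)
  refine (((contDiff_mpEps (n := 1)).differentiable one_ne_zero a).hasDerivAt.div hden
    (pow_ne_zero 4 h)).congr_deriv ?_
  unfold m1WeightDeriv
  field_simp

theorem continuousOn_m1Weight {a : ℝ} (ha : a ∈ Ioo (-1) 1) :
    ContinuousOn (m1Weight a) [[-1, 1]] :=
  ContinuousOn.div continuousOn_const (by fun_prop) fun t ht =>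
    (pow_pos (one_add_mul_pos ha ht) 4).ne'

theorem continuousOn_m1WeightDeriv :
    ContinuousOn (uncurry m1WeightDeriv) (Ioo (-1) 1 ×ˢ [[-1, 1]]) := by
  have hpos : ∀ p ∈ Ioo (-1 : ℝ) 1 ×ˢ [[-1, 1]], 0 < 1 + p.1 * p.2 := fun p hp =>
    one_add_mul_pos hp.1 hp.2
  have hε := (contDiff_mpEps (n := 1)).continuous
  have hε' := (contDiff_mpEps (n := 1)).continuous_deriv le_rfl
  refine ContinuousOn.sub (ContinuousOn.div (by fun_prop) (by fun_prop) fun p hp => ?_)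
    (ContinuousOn.div (by fun_prop) (by fun_prop) fun p hp => ?_)
  · exact (pow_pos (hpos p hp) 4).ne'
  · exact (pow_pos (hpos p hp) 5).ne'

theorem hasDerivAt_m1Moment (k : ℕ) {a : ℝ} (ha : a ∈ Ioo (-1) 1) :
    HasDerivAt (m1Moment k) (∫ μ in (-1 : ℝ)..1, μ ^ k * m1WeightDeriv a μ) a :=
  hasDerivAt_intervalIntegral_of_continuousOn (f' := fun b μ => μ ^ k * m1WeightDeriv b μ)
    (Ioo_mem_nhds ha.1 ha.2)
    (fun _ hb => (continuousOn_pow k).mul (continuousOn_m1Weight hb))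
    ((continuous_snd.pow k).continuousOn.mul continuousOn_m1WeightDeriv)
    fun _ hb _ ht => (hasDerivAt_m1Weight (one_add_mul_pos hb ht).ne').const_mul _

theorem contDiffOn_m1Moment (k : ℕ) : ContDiffOn ℝ 1 (m1Moment k) (Ioo (-1) 1) :=
  contDiffOn_intervalIntegral_of_continuousOn (f' := fun b μ => μ ^ k * m1WeightDeriv b μ)
    isOpen_Ioo
    (fun _ hb => (continuousOn_pow k).mul (continuousOn_m1Weight hb))
    ((continuous_snd.pow k).continuousOn.mul continuousOn_m1WeightDeriv)
    fun _ hb _ ht => (hasDerivAt_m1Weight (one_add_mul_pos hb ht).ne').const_mul _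

theorem mpEps_zero : mpEps 0 = 1 / 2 := by norm_num [mpEps]

theorem hasDerivAt_mpEps_zero : HasDerivAt mpEps 0 0 := by
  have hnum := (((hasDerivAt_id (0 : ℝ)).pow 2).const_sub 1).pow 3 |>.const_mul 3
  have hden := ((hasDerivAt_id (0 : ℝ)).pow 2).const_add 3 |>.const_mul 2
  exact (hnum.div hden (by norm_num)).congr_deriv (by simp)

theorem m1WeightDeriv_zero (μ : ℝ) : m1WeightDeriv 0 μ = -2 * μ := by
  rw [m1WeightDeriv, hasDerivAt_mpEps_zero.deriv, mpEps_zero]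
  ring

theorem mpAlpha_zero : mpAlpha 0 = 0 := by simp [mpAlpha]

theorem hasDerivAt_mpAlpha_zero : HasDerivAt mpAlpha (-3 / 4) 0 := by
  have hsqrt := (((hasDerivAt_id (0 : ℝ)).pow 2).const_mul 3).const_sub 4 |>.sqrt (by norm_num)
  exact (((hasDerivAt_id (0 : ℝ)).const_mul 3).neg.div (hsqrt.const_add 2)
    (by positivity)).congr_deriv (by norm_num)

theorem contDiffAt_mpAlpha_zero {n : WithTop ℕ∞} : ContDiffAt ℝ n mpAlpha 0 := by
  have hsqrt : ContDiffAt ℝ n (fun u : ℝ => Real.sqrt (4 - 3 * u ^ 2)) 0 :=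
    (contDiffAt_const.sub (contDiffAt_const.mul (contDiffAt_id.pow 2))).sqrt (by norm_num)
  exact (contDiffAt_id.const_smul (3 : ℝ)).neg.div (contDiffAt_const.add hsqrt) (by positivity)

theorem mpMoment_zero (k : ℕ) : mpMoment 0 k = (1 - (-1) ^ (k + 1)) / (2 * (k + 1)) := by
  simp only [mpMoment_eq_m1Moment, mpAlpha_zero, m1Moment, m1Weight, mpEps_zero, zero_mul,
    add_zero, one_pow, div_one, intervalIntegral.integral_mul_const, integral_pow]
  field_simp

theorem hasDerivAt_mpMoment_zero (k : ℕ) :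
    HasDerivAt (mpMoment · k) (3 * (1 - (-1) ^ (k + 2)) / (2 * (k + 2))) 0 := by
  have hm := hasDerivAt_m1Moment k (a := 0) (by norm_num)
  rw [← mpAlpha_zero] at hm
  refine (hm.comp 0 hasDerivAt_mpAlpha_zero).congr_deriv ?_
  have hint : ∀ μ : ℝ, μ ^ k * m1WeightDeriv 0 μ = μ ^ (k + 1) * (-2) := fun μ => by
    rw [m1WeightDeriv_zero]; ring
  simp only [mpAlpha_zero, hint, intervalIntegral.integral_mul_const, integral_pow]
  push_cast
  field_simp
  ring

theorem contDiffAt_mpMoment_zero (k : ℕ) : ContDiffAt ℝ 1 (mpMoment · k) 0 := by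
  have hm := (contDiffOn_m1Moment k).contDiffAt (x := mpAlpha 0)
    (Ioo_mem_nhds (by norm_num [mpAlpha_zero]) (by norm_num [mpAlpha_zero]))
  exact hm.comp 0 contDiffAt_mpAlpha_zero

noncomputable def mpF2Denom (u : ℝ) : ℝ :=
  mpMoment u 4 - mpMoment u 2 ^ 2 - mpBeta u * (mpMoment u 3 - mpMoment u 1 * mpMoment u 2)

noncomputable def mpF2Factor (u : ℝ) : ℝ :=
  mpMoment u 5 - mpMoment u 2 * mpMoment u 3 -
    mpBeta u * (mpMoment u 4 - mpMoment u 1 * mpMoment u 3)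

noncomputable def mpE3Slope (u : ℝ) : ℝ := mpF2Factor u / mpF2Denom u

noncomputable def mpE3Intercept (u : ℝ) : ℝ := mpMoment u 3 - mpMoment u 2 * mpE3Slope u

theorem mpE3_eq {E0 : ℝ} (hE0 : E0 ≠ 0) (E1 E2 : ℝ) :
    mpE3 E0 E1 E2 = E0 * (mpE3Intercept (E1 / E0) + E2 / E0 * mpE3Slope (E1 / E0)) := by
  simp only [mpE3, mpF2, mpE3Intercept, mpE3Slope, mpF2Factor, mpF2Denom]
  field_simp
  ring

theorem mpBeta_zero : mpBeta 0 = 0 := by norm_num [mpBeta, mpMoment_zero]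

theorem mpF2Denom_zero : mpF2Denom 0 = 4 / 45 := by
  norm_num [mpF2Denom, mpBeta_zero, mpMoment_zero]

theorem mpF2Factor_zero : mpF2Factor 0 = 0 := by
  norm_num [mpF2Factor, mpBeta_zero, mpMoment_zero]

theorem hasDerivAt_mpBeta_zero : HasDerivAt mpBeta (4 / 5) 0 := by
  have hm := hasDerivAt_mpMoment_zero
  refine (((hm 3).sub ((hm 2).mul (hm 1))).div ((hm 2).sub ((hm 1).pow 2)) ?_).congr_deriv ?_ <;>
    norm_num [mpMoment_zero]

theorem hasDerivAt_mpF2Factor_zero : HasDerivAt mpF2Factor (12 / 175) 0 := by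
  have hm := hasDerivAt_mpMoment_zero
  refine (((hm 5).sub ((hm 2).mul (hm 3))).sub
    (hasDerivAt_mpBeta_zero.mul ((hm 4).sub ((hm 1).mul (hm 3))))).congr_deriv ?_
  norm_num [mpMoment_zero, mpBeta_zero]

theorem contDiffAt_mpBeta_zero : ContDiffAt ℝ 1 mpBeta 0 := by
  have hm := contDiffAt_mpMoment_zero
  exact ((hm 3).sub ((hm 2).mul (hm 1))).div ((hm 2).sub ((hm 1).pow 2))
    (by norm_num [mpMoment_zero])

theorem contDiffAt_mpF2Denom_zero : ContDiffAt ℝ 1 mpF2Denom 0 := by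
  have hm := contDiffAt_mpMoment_zero
  exact ((hm 4).sub ((hm 2).pow 2)).sub
    (contDiffAt_mpBeta_zero.mul ((hm 3).sub ((hm 1).mul (hm 2))))

theorem contDiffAt_mpF2Factor_zero : ContDiffAt ℝ 1 mpF2Factor 0 := by
  have hm := contDiffAt_mpMoment_zero
  exact ((hm 5).sub ((hm 2).mul (hm 3))).sub
    (contDiffAt_mpBeta_zero.mul ((hm 4).sub ((hm 1).mul (hm 3))))

theorem contDiffAt_mpE3Slope_zero : ContDiffAt ℝ 1 mpE3Slope 0 :=
  contDiffAt_mpF2Factor_zero.div contDiffAt_mpF2Denom_zero (by norm_num [mpF2Denom_zero])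

theorem contDiffAt_mpE3Intercept_zero : ContDiffAt ℝ 1 mpE3Intercept 0 :=
  (contDiffAt_mpMoment_zero 3).sub ((contDiffAt_mpMoment_zero 2).mul contDiffAt_mpE3Slope_zero)

theorem hasDerivAt_mpE3Slope_zero : HasDerivAt mpE3Slope (27 / 35) 0 := by
  have hQ := (contDiffAt_mpF2Denom_zero.differentiableAt one_ne_zero).hasDerivAt
  refine (hasDerivAt_mpF2Factor_zero.div hQ (by norm_num [mpF2Denom_zero])).congr_deriv ?_
  norm_num [mpF2Factor_zero, mpF2Denom_zero]

theorem hasDerivAt_mpE3Intercept_zero : HasDerivAt mpE3Intercept (12 / 35) 0 := by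
  refine ((hasDerivAt_mpMoment_zero 3).sub ((hasDerivAt_mpMoment_zero 2).mul
    hasDerivAt_mpE3Slope_zero)).congr_deriv ?_
  norm_num [mpMoment_zero, mpE3Slope, mpF2Factor_zero]

theorem hasDerivAt_mpE3 {E0 E1 : ℝ} (E2 : ℝ) (hE0 : E0 ≠ 0)
    (hI : DifferentiableAt ℝ mpE3Intercept (E1 / E0))
    (hS : DifferentiableAt ℝ mpE3Slope (E1 / E0)) :
    HasDerivAt (fun y => mpE3 E0 y E2)
      (deriv mpE3Intercept (E1 / E0) + E2 / E0 * deriv mpE3Slope (E1 / E0)) E1 := by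
  simp only [mpE3_eq hE0]
  refine (((hI.hasDerivAt.add (hS.hasDerivAt.const_mul (E2 / E0))).comp E1
    ((hasDerivAt_id E1).div_const E0)).const_mul E0).congr_deriv ?_
  field_simp

theorem MP2_dE3_dE1_at_zero_general (E0 E2 : ℝ) (h0 : 0 < E0) (h2pos : 0 < E2) :
    0 < deriv (fun y => mpE3 E0 y E2) 0 ∧
    Filter.Tendsto (fun E1 : ℝ => deriv (fun y => mpE3 E0 y (E1 ^ 2 / E0)) E1)
      (nhdsWithin 0 {(0 : ℝ)}ᶜ) (nhds (12 / 35)) := by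
  have hu : Tendsto (fun E1 : ℝ => E1 / E0) (𝓝 0) (𝓝 0) := by
    simpa using (continuous_id.div_const E0).tendsto 0
  have hdiff := (contDiffAt_mpE3Intercept_zero.eventually (by simp)).and
    (contDiffAt_mpE3Slope_zero.eventually (by simp))
  have hderiv : ∀ᶠ E1 in 𝓝 0, ∀ c, deriv (fun y => mpE3 E0 y c) E1 =
      deriv mpE3Intercept (E1 / E0) + c / E0 * deriv mpE3Slope (E1 / E0) :=
    (hu.eventually hdiff).mono fun E1 h c => (hasDerivAt_mpE3 c h0.ne'
      (h.1.differentiableAt one_ne_zero) (h.2.differentiableAt one_ne_zero)).deriv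
  constructor
  · rw [hderiv.self_of_nhds, zero_div, hasDerivAt_mpE3Intercept_zero.deriv,
      hasDerivAt_mpE3Slope_zero.deriv]
    positivity
  · have hcont : ContinuousAt (fun E1 : ℝ =>
        deriv mpE3Intercept (E1 / E0) + E1 ^ 2 / E0 / E0 * deriv mpE3Slope (E1 / E0)) 0 := by
      have hI := (contDiffAt_mpE3Intercept_zero.continuousAt_deriv one_ne_zero).comp_of_eq
        (continuous_id.div_const E0).continuousAt (zero_div E0)
      have hS := (contDiffAt_mpE3Slope_zero.continuousAt_deriv one_ne_zero).comp_of_eq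
        (continuous_id.div_const E0).continuousAt (zero_div E0)
      exact hI.add ((((continuous_pow 2).div_const E0).div_const E0).continuousAt.mul hS)
    refine (Tendsto.congr' (hderiv.mono fun E1 h => (h _).symm) ?_).mono_left nhdsWithin_le_nhds
    simpa [hasDerivAt_mpE3Intercept_zero.deriv] using hcont.tendsto

/-- At `E₁ = 0` the partial derivative `∂E₃/∂E₁` is strictly positive on the
realizable domain; moreover, its value restricted to `E₂ = E₁²/E₀` tends to
`12/35` as `E₁ → 0` (i.e. as `α → 0`). -/
theorem MP2_dE3_dE1_at_zero (E0 E2 : ℝ) (h0 : 0 < E0) (h2pos : 0 < E2) (h2 : E2 < E0) :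
    0 < deriv (fun y => mpE3 E0 y E2) 0 ∧
    Filter.Tendsto (fun E1 : ℝ => deriv (fun y => mpE3 E0 y (E1 ^ 2 / E0)) E1)
      (nhdsWithin 0 {(0 : ℝ)}ᶜ) (nhds (12 / 35)) :=
  MP2_dE3_dE1_at_zero_general E0 E2 h0 h2pos
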